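/- Let 𝔤 be a Lie algebra with an almost anti-Hermitian structure (⟨·,·⟩, J) such that the 3-tensor θ(X,Y,Z) = ⟨[JX,Y],Z⟩ + ⟨[JY,Z],X⟩ + ⟨[JZ,X],Y⟩ vanishes identically on 𝔤. Then the structure is anti-Kähler: ∇_X(JY) = J∇_X Y for all X,Y ∈ 𝔤. -/

import Mathlib

/-!
The Koszul formula expresses `2⟨∇_X (JY), Z⟩ - 2⟨∇_X Y, JZ⟩` as a signed sum of six brackets
paired with the form. Using `J² = -1` and the skew-symmetry of the bracket, these six terms
add up to `θ(JX,Y,JZ) + θ(JX,Z,JY) - θ(X,Z,Y) - θ(Y,Z,X)`. Since `J` is self-adjoint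
for `⟨·,·⟩`, the left side is `2⟨∇_X (JY) - J∇_X Y, Z⟩`, so `θ = 0` and nondegeneracy give
`∇_X (JY) = J∇_X Y`.
-/

def antiHermitianTheta {V : Type*} [LieRing V] [LieAlgebra ℝ V]
    (B : V →ₗ[ℝ] V →ₗ[ℝ] ℝ) (J : V →ₗ[ℝ] V) (X Y Z : V) : ℝ :=
  B ⁅J X, Y⁆ Z + B ⁅J Y, Z⁆ X + B ⁅J Z, X⁆ Y

section

variable {V : Type*} [LieRing V] [LieAlgebra ℝ V] {B : V →ₗ[ℝ] V →ₗ[ℝ] ℝ} {J : V →ₗ[ℝ] V}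

theorem isAdjointPair_self_of_antiIsometry (hJ2 : ∀ X, J (J X) = -X)
    (hJB : ∀ X Y, B (J X) (J Y) = -B X Y) : LinearMap.IsAdjointPair B B J J := by
  intro X Y
  simpa [hJ2] using hJB X (J Y)

theorem apply_lie_swap (B : V →ₗ[ℝ] V →ₗ[ℝ] ℝ) (X Y Z : V) : B ⁅X, Y⁆ Z = -B ⁅Y, X⁆ Z := by
  rw [← lie_skew X Y, map_neg, LinearMap.neg_apply]

theorem koszul_J_sub_eq_antiHermitianTheta (hJ2 : ∀ X, J (J X) = -X)
    {nabla : V →ₗ[ℝ] V →ₗ[ℝ] V}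
    (hKoszul : ∀ X Y Z, 2 * B (nabla X Y) Z = B ⁅X, Y⁆ Z - B ⁅Y, Z⁆ X + B ⁅Z, X⁆ Y)
    (X Y Z : V) :
    2 * B (nabla X (J Y)) Z - 2 * B (nabla X Y) (J Z) =
      antiHermitianTheta B J (J X) Y (J Z) + antiHermitianTheta B J (J X) Z (J Y) -
        antiHermitianTheta B J X Z Y - antiHermitianTheta B J Y Z X := by
  simp only [hKoszul, antiHermitianTheta, hJ2, neg_lie, map_neg, LinearMap.neg_apply]
  linarith [apply_lie_swap B X (J Y) Z, apply_lie_swap B Z X (J Y),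
    apply_lie_swap B Y (J Z) X, apply_lie_swap B (J Y) (J Z) (J X),
    apply_lie_swap B Z (J X) Y, apply_lie_swap B Y (J X) Z]

end

theorem antiKaehler_of_theta_zero_general
    (V : Type*) [LieRing V] [LieAlgebra ℝ V]
    (B : V →ₗ[ℝ] V →ₗ[ℝ] ℝ)
    (hnd : ∀ X, (∀ Y, B X Y = 0) → X = 0)
    (J : V →ₗ[ℝ] V) (hJ2 : ∀ X, J (J X) = -X)
    (hJB : ∀ X Y, B (J X) (J Y) = - B X Y)
    (nabla : V →ₗ[ℝ] V →ₗ[ℝ] V)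
    (hKoszul : ∀ X Y Z, 2 * B (nabla X Y) Z
        = B ⁅X, Y⁆ Z - B ⁅Y, Z⁆ X + B ⁅Z, X⁆ Y)
    (htheta : ∀ X Y Z, antiHermitianTheta B J X Y Z = 0) :
    ∀ X Y, nabla X (J Y) = J (nabla X Y) := by
  intro X Y
  refine sub_eq_zero.mp (hnd _ fun Z => ?_)
  have hdiff := koszul_J_sub_eq_antiHermitianTheta hJ2 hKoszul X Y Z
  simp only [htheta, add_zero, sub_zero] at hdiff
  rw [map_sub, LinearMap.sub_apply, isAdjointPair_self_of_antiIsometry hJ2 hJB]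
  linarith

/-- If the 3-tensor `θ` of a left invariant almost anti-Hermitian structure
vanishes identically, then the structure is anti-Kähler:
`∇_X (JY) = J ∇_X Y`. -/
theorem antiKaehler_of_theta_zero
    (V : Type*) [LieRing V] [LieAlgebra ℝ V]
    (B : V →ₗ[ℝ] V →ₗ[ℝ] ℝ)
    (hsymm : ∀ X Y, B X Y = B Y X)
    (hnd : ∀ X, (∀ Y, B X Y = 0) → X = 0)
    (J : V →ₗ[ℝ] V) (hJ2 : ∀ X, J (J X) = -X)
    (hJB : ∀ X Y, B (J X) (J Y) = - B X Y)
    (nabla : V →ₗ[ℝ] V →ₗ[ℝ] V)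
    (hKoszul : ∀ X Y Z, 2 * B (nabla X Y) Z
        = B ⁅X, Y⁆ Z - B ⁅Y, Z⁆ X + B ⁅Z, X⁆ Y)
    (htheta : ∀ X Y Z, antiHermitianTheta B J X Y Z = 0) :
    ∀ X Y, nabla X (J Y) = J (nabla X Y) :=
  antiKaehler_of_theta_zero_general V B hnd J hJ2 hJB nabla hKoszul htheta
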